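/- arXiv:2406.17182 — 6 statements merged into one kernel-verified Lean document; each statement's English description precedes it below -/
import Mathlib

section
/- Let ℓ1, ℓ0 ∈ ℝ and let ρ01, ρ10 ≥ 0 with ρ01 + ρ10 < 1. Define the surrogate losses ℓ̃1 = ((1−ρ10)·ℓ1 − ρ01·ℓ0)/(1−ρ01−ρ10) and ℓ̃0 = ((1−ρ01)·ℓ0 − ρ10·ℓ1)/(1−ρ01−ρ10). Then (1−ρ01)·ℓ̃1 + ρ01·ℓ̃0 = ℓ1 and (1−ρ10)·ℓ̃0 + ρ10·ℓ̃1 = ℓ0; that is, the surrogate losses solve the unbiasedness equations for outcome measurement error with false negative rate ρ01 and false positive rate ρ10. -/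
theorem surrogate_loss_solves_unbiasedness_equations_of_ne_zero {K : Type*} [Field K] (l1 l0 ρ01 ρ10 : K)
    (h : 1 - ρ01 - ρ10 ≠ 0) :
    (1 - ρ01) * (((1 - ρ10) * l1 - ρ01 * l0) / (1 - ρ01 - ρ10)) +
        ρ01 * (((1 - ρ01) * l0 - ρ10 * l1) / (1 - ρ01 - ρ10)) = l1 ∧
    (1 - ρ10) * (((1 - ρ01) * l0 - ρ10 * l1) / (1 - ρ01 - ρ10)) +
        ρ10 * (((1 - ρ10) * l1 - ρ01 * l0) / (1 - ρ01 - ρ10)) = l0 := by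
  constructor <;> field_simp <;> ring

theorem surrogate_loss_solves_unbiasedness_equations_general
    (l1 l0 ρ01 ρ10 : ℝ) (hsum : ρ01 + ρ10 < 1) :
    (1 - ρ01) * (((1 - ρ10) * l1 - ρ01 * l0) / (1 - ρ01 - ρ10)) +
        ρ01 * (((1 - ρ01) * l0 - ρ10 * l1) / (1 - ρ01 - ρ10)) = l1 ∧
    (1 - ρ10) * (((1 - ρ01) * l0 - ρ10 * l1) / (1 - ρ01 - ρ10)) +
        ρ10 * (((1 - ρ10) * l1 - ρ01 * l0) / (1 - ρ01 - ρ10)) = l0 :=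
  surrogate_loss_solves_unbiasedness_equations_of_ne_zero l1 l0 ρ01 ρ10 (by linarith)

/-- The surrogate losses built from error rates `ρ01` (false negative
rate) and `ρ10` (false positive rate) solve the unbiasedness equations for outcome
measurement error. -/
theorem surrogate_loss_solves_unbiasedness_equations
    (l1 l0 ρ01 ρ10 : ℝ) (h01 : 0 ≤ ρ01) (h10 : 0 ≤ ρ10) (hsum : ρ01 + ρ10 < 1) :
    (1 - ρ01) * (((1 - ρ10) * l1 - ρ01 * l0) / (1 - ρ01 - ρ10)) +
        ρ01 * (((1 - ρ01) * l0 - ρ10 * l1) / (1 - ρ01 - ρ10)) = l1 ∧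
    (1 - ρ10) * (((1 - ρ01) * l0 - ρ10 * l1) / (1 - ρ01 - ρ10)) +
        ρ10 * (((1 - ρ10) * l1 - ρ01 * l0) / (1 - ρ01 - ρ10)) = l0 :=
  surrogate_loss_solves_unbiasedness_equations_general l1 l0 ρ01 ρ10 hsum
end

section
/- Let ℓ1, ℓ0 ∈ ℝ, let the true error rates ρ01, ρ10 ≥ 0 satisfy ρ01 + ρ10 < 1, and let the estimated error rates ρ̂01, ρ̂10 ≥ 0 satisfy ρ̂01 + ρ̂10 < 1. Define the surrogate losses ℓ̃1 = ((1−ρ̂10)·ℓ1 − ρ̂01·ℓ0)/(1−ρ̂01−ρ̂10) and ℓ̃0 = ((1−ρ̂01)·ℓ0 − ρ̂10·ℓ1)/(1−ρ̂01−ρ̂10). Let r ∈ {0,1} be a Bernoulli random variable with P(r = 1) = 1 − ρ01 (the law of the observed rating given true rating r* = 1), and set ẽ = r·ℓ̃1 + (1−r)·ℓ̃0. Then E[ẽ] = ω11·ℓ1 + ω01·ℓ0, where ω11 = (1−ρ01−ρ̂10)/(1−ρ̂01−ρ̂10) and ω01 = (ρ01−ρ̂01)/(1−ρ̂01−ρ̂10).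 -/
theorem mix_surrogate_losses_eq {K : Type*} [Field K] (l1 l0 q a b : K) (hd : 1 - a - b ≠ 0) :
    (1 - q) * (((1 - b) * l1 - a * l0) / (1 - a - b)) +
        q * (((1 - a) * l0 - b * l1) / (1 - a - b)) =
      ((1 - q - b) / (1 - a - b)) * l1 + ((q - a) / (1 - a - b)) * l0 := by
  field_simp
  ring

theorem expectation_surrogate_error_true_positive_general
    (l1 l0 ρ01 ρh01 ρh10 : ℝ)
    (hhsum : ρh01 + ρh10 < 1) :
    (∑ r : Bool, (if r then 1 - ρ01 else ρ01) *
        (if r then ((1 - ρh10) * l1 - ρh01 * l0) / (1 - ρh01 - ρh10)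
         else ((1 - ρh01) * l0 - ρh10 * l1) / (1 - ρh01 - ρh10))) =
      ((1 - ρ01 - ρh10) / (1 - ρh01 - ρh10)) * l1 +
        ((ρ01 - ρh01) / (1 - ρh01 - ρh10)) * l0 := by
  rw [Fintype.sum_bool]
  exact mix_surrogate_losses_eq l1 l0 ρ01 ρh01 ρh10 (by linarith)

/-- Expectation of the surrogate error under the law of the observed
rating given true rating `r* = 1` (i.e. `P(r = 1) = 1 − ρ01`): the expectation over the
Bernoulli random variable `r : Bool` of
`ẽ = r·ℓ̃1 + (1−r)·ℓ̃0` equals `ω11·ℓ1 + ω01·ℓ0`. -/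
theorem expectation_surrogate_error_true_positive
    (l1 l0 ρ01 ρ10 ρh01 ρh10 : ℝ)
    (h01 : 0 ≤ ρ01) (h10 : 0 ≤ ρ10) (hsum : ρ01 + ρ10 < 1)
    (hh01 : 0 ≤ ρh01) (hh10 : 0 ≤ ρh10) (hhsum : ρh01 + ρh10 < 1) :
    (∑ r : Bool, (if r then 1 - ρ01 else ρ01) *
        (if r then ((1 - ρh10) * l1 - ρh01 * l0) / (1 - ρh01 - ρh10)
         else ((1 - ρh01) * l0 - ρh10 * l1) / (1 - ρh01 - ρh10))) =
      ((1 - ρ01 - ρh10) / (1 - ρh01 - ρh10)) * l1 +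
        ((ρ01 - ρh01) / (1 - ρh01 - ρh10)) * l0 :=
  expectation_surrogate_error_true_positive_general l1 l0 ρ01 ρh01 ρh10 hhsum
end

section
/- Let ℓ1, ℓ0 ∈ ℝ, let the true error rates ρ01, ρ10 ≥ 0 satisfy ρ01 + ρ10 < 1, and let the estimated error rates ρ̂01, ρ̂10 ≥ 0 satisfy ρ̂01 + ρ̂10 < 1. Define the surrogate losses ℓ̃1 = ((1−ρ̂10)·ℓ1 − ρ̂01·ℓ0)/(1−ρ̂01−ρ̂10) and ℓ̃0 = ((1−ρ̂01)·ℓ0 − ρ̂10·ℓ1)/(1−ρ̂01−ρ̂10). Let r ∈ {0,1} be a Bernoulli random variable with P(r = 1) = ρ10 (the law of the observed rating given true rating r* = 0), and set ẽ = r·ℓ̃1 + (1−r)·ℓ̃0. Then E[ẽ] = ω10·ℓ1 + ω00·ℓ0, where ω10 = (ρ10−ρ̂10)/(1−ρ̂01−ρ̂10) and ω00 = (1−ρ̂01−ρ10)/(1−ρ̂01−ρ̂10). -/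
theorem expectation_surrogate_error_true_negative_general
    (l1 l0 ρ10 ρh01 ρh10 : ℝ)
    (hhsum : ρh01 + ρh10 < 1) :
    (∑ r : Bool, (if r then ρ10 else 1 - ρ10) *
        (if r then ((1 - ρh10) * l1 - ρh01 * l0) / (1 - ρh01 - ρh10)
         else ((1 - ρh01) * l0 - ρh10 * l1) / (1 - ρh01 - ρh10))) =
      ((ρ10 - ρh10) / (1 - ρh01 - ρh10)) * l1 +
        ((1 - ρh01 - ρ10) / (1 - ρh01 - ρh10)) * l0 := by
  have hden : 1 - ρh01 - ρh10 ≠ 0 := by linarith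
  simp only [Fintype.sum_bool, if_true, Bool.false_eq_true, if_false]
  field_simp
  ring

/-- Expectation of the surrogate error under the law of the observed
rating given true rating `r* = 0` (i.e. `P(r = 1) = ρ10`): the expectation over the
Bernoulli random variable `r : Bool` of
`ẽ = r·ℓ̃1 + (1−r)·ℓ̃0` equals `ω10·ℓ1 + ω00·ℓ0`. -/
theorem expectation_surrogate_error_true_negative
    (l1 l0 ρ01 ρ10 ρh01 ρh10 : ℝ)
    (h01 : 0 ≤ ρ01) (h10 : 0 ≤ ρ10) (hsum : ρ01 + ρ10 < 1)
    (hh01 : 0 ≤ ρh01) (hh10 : 0 ≤ ρh10) (hhsum : ρh01 + ρh10 < 1) :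
    (∑ r : Bool, (if r then ρ10 else 1 - ρ10) *
        (if r then ((1 - ρh10) * l1 - ρh01 * l0) / (1 - ρh01 - ρh10)
         else ((1 - ρh01) * l0 - ρh10 * l1) / (1 - ρh01 - ρh10))) =
      ((ρ10 - ρh10) / (1 - ρh01 - ρh10)) * l1 +
        ((1 - ρh01 - ρ10) / (1 - ρh01 - ρh10)) * l0 :=
  expectation_surrogate_error_true_negative_general l1 l0 ρ10 ρh01 ρh10 hhsum
end

section
/- (Bias of the OME-DR estimator.) Under the OME recommendation setup, the bias of the OME-DR estimator equals (1/|D|)·| Σ_{(u,i)∈D} (1 − p_{u,i}/p̂_{u,i})·ē_{u,i} + Σ_{(u,i): r*_{u,i}=1} [ ((p_{u,i}·ω11 − p̂_{u,i})/p̂_{u,i})·ℓ_{u,i}(1) + (p_{u,i}·ω01/p̂_{u,i})·ℓ_{u,i}(0) ] + Σ_{(u,i): r*_{u,i}=0} [ (p_{u,i}·ω10/p̂_{u,i})·ℓ_{u,i}(1) + ((p_{u,i}·ω00 − p̂_{u,i})/p̂_{u,i})·ℓ_{u,i}(0) ] |, where ω11 = (1−ρ01−ρ̂10)/(1−ρ̂01−ρ̂10),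 ω01 = (ρ01−ρ̂01)/(1−ρ̂01−ρ̂10), ω10 = (ρ10−ρ̂10)/(1−ρ̂01−ρ̂10), ω00 = (1−ρ̂01−ρ10)/(1−ρ̂01−ρ̂10). -/
/-!
The estimator is a sum of one term per pair, each depending only on that pair's `o` and `r`,
so by independence its expectation only involves the two Bernoulli marginals. There
`E[o / p̂] = p / p̂`, and when `P(r = 1) = q` the surrogate error has mean
`((q - ρ̂10) ℓ(1) + (1 - q - ρ̂01) ℓ(0)) / (1 - ρ̂01 - ρ̂10)`; taking `q = 1 - ρ01` resp. `q = ρ10`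
produces the weights `ω11, ω01` resp. `ω10, ω00`.
-/

open Finset

/-- Expectation of a functional `g` of jointly independent families of Bernoulli random
variables `o d ~ Bernoulli (p d)` (observation indicators) and `r d ~ Bernoulli (q d)`
(observed ratings), encoded as a weighted sum over all realizations. -/
noncomputable def expectOR {D : Type*} [Fintype D] [DecidableEq D] (p q : D → ℝ)
    (g : (D → Bool) → (D → Bool) → ℝ) : ℝ :=
  ∑ o : D → Bool, ∑ r : D → Bool,
    ((∏ d, (if o d then p d else 1 - p d)) * (∏ d, (if r d then q d else 1 - q d))) * g o r

theorem Fintype.sum_prod_mul_apply {ι β R : Type*} [Fintype ι] [DecidableEq ι] [Fintype β]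
    [CommSemiring R] (w : ι → β → R) (hw : ∀ i, ∑ b, w i b = 1) (i₀ : ι) (F : β → R) :
    ∑ f : ι → β, (∏ i, w i (f i)) * F (f i₀) = ∑ b, w i₀ b * F b := by
  set v : ι → β → R := fun i b => w i b * if i = i₀ then F b else 1
  have h_prod (f : ι → β) : (∏ i, w i (f i)) * F (f i₀) = ∏ i, v i (f i) := by
    rw [prod_mul_distrib, Fintype.prod_ite_eq']
  have h_factor (i : ι) : ∑ b, v i b = if i = i₀ then ∑ b, w i₀ b * F b else 1 := by
    split_ifs with h
    · subst h; simp [v]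
    · simpa [v, h] using hw i
  simp_rw [h_prod]
  rw [← Fintype.prod_sum v]
  simp_rw [h_factor]
  exact Fintype.prod_ite_eq' _ _

section Expectation

variable {D : Type*} [Fintype D] [DecidableEq D]

theorem expectOR_const_mul (p q : D → ℝ) (c : ℝ) (g : (D → Bool) → (D → Bool) → ℝ) :
    expectOR p q (fun o r => c * g o r) = c * expectOR p q g := by
  simp only [expectOR, mul_sum]
  exact sum_congr rfl fun _ _ => sum_congr rfl fun _ _ => by ring

theorem expectOR_sum (p q : D → ℝ) (F : D → Bool → Bool → ℝ) :
    expectOR p q (fun o r => ∑ d, F d (o d) (r d)) =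
      ∑ d, ∑ a, ∑ b, ((if a then p d else 1 - p d) * (if b then q d else 1 - q d)) * F d a b := by
  have h_bernoulli (x : ℝ) : ∑ b : Bool, (if b then x else 1 - x) = 1 := by simp
  have h_marginal (d : D) :
      ∑ o : D → Bool, ∑ r : D → Bool,
        ((∏ e, (if o e then p e else 1 - p e)) * (∏ e, (if r e then q e else 1 - q e))) *
          F d (o d) (r d) =
      ∑ a, ∑ b, ((if a then p d else 1 - p d) * (if b then q d else 1 - q d)) * F d a b := by
    simp_rw [mul_assoc, ← mul_sum]
    rw [Fintype.sum_prod_mul_apply _ (fun e => h_bernoulli (p e)) d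
      (fun a => ∑ r : D → Bool, (∏ e, (if r e then q e else 1 - q e)) * F d a (r d))]
    simp_rw [Fintype.sum_prod_mul_apply _ (fun e => h_bernoulli (q e)) d]
  simp only [expectOR, mul_sum]
  conv_lhs => enter [2, o]; rw [sum_comm]
  rw [sum_comm]
  exact sum_congr rfl fun d _ => h_marginal d

end Expectation

-- Reducible, so that `rw` recognises the estimator as written out in `bias_OME_DR`.
noncomputable abbrev surrogateLoss (ρh01 ρh10 : ℝ) (l : Bool → ℝ) (r : Bool) : ℝ :=
  if r then ((1 - ρh10) * l true - ρh01 * l false) / (1 - ρh01 - ρh10)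
  else ((1 - ρh01) * l false - ρh10 * l true) / (1 - ρh01 - ρh10)

noncomputable abbrev doublyRobustError (phat ebar : ℝ) (e : Bool → ℝ) (o r : Bool) : ℝ :=
  (1 - (if o then (1 : ℝ) else 0) / phat) * ebar + ((if o then (1 : ℝ) else 0) / phat) * e r

theorem expect_surrogateLoss (q ρh01 ρh10 : ℝ) (l : Bool → ℝ) :
    q * surrogateLoss ρh01 ρh10 l true + (1 - q) * surrogateLoss ρh01 ρh10 l false =
      (q - ρh10) / (1 - ρh01 - ρh10) * l true + (1 - q - ρh01) / (1 - ρh01 - ρh10) * l false := by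
  simp only [surrogateLoss, if_true, Bool.false_eq_true, if_false]
  ring

theorem expect_doublyRobustError (p q phat ebar : ℝ) (e : Bool → ℝ) :
    ∑ a : Bool, ∑ b : Bool, ((if a then p else 1 - p) * (if b then q else 1 - q)) *
        doublyRobustError phat ebar e a b =
      (1 - p / phat) * ebar + p / phat * (q * e true + (1 - q) * e false) := by
  simp only [doublyRobustError, Fintype.sum_bool, if_true, Bool.false_eq_true, if_false]
  ring

theorem bias_OME_DR_general {D : Type*} [Fintype D] [DecidableEq D]
    (rstar : D → Bool) (l : D → Bool → ℝ) (p phat ebar : D → ℝ)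
    (ρ01 ρ10 ρh01 ρh10 : ℝ)
    (hphat : ∀ d, 0 < phat d) :
    |expectOR p (fun d => if rstar d then 1 - ρ01 else ρ10)
        (fun o r => (1 / (Fintype.card D : ℝ)) * ∑ d,
          ((1 - (if o d then (1 : ℝ) else 0) / phat d) * ebar d +
            ((if o d then (1 : ℝ) else 0) / phat d) *
              (if r d then ((1 - ρh10) * l d true - ρh01 * l d false) / (1 - ρh01 - ρh10)
               else ((1 - ρh01) * l d false - ρh10 * l d true) / (1 - ρh01 - ρh10)))) -
        (1 / (Fintype.card D : ℝ)) * ∑ d, l d (rstar d)| =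
      (1 / (Fintype.card D : ℝ)) *
        |(∑ d, (1 - p d / phat d) * ebar d) +
          (∑ d ∈ univ.filter (fun d => rstar d = true),
            (((p d * ((1 - ρ01 - ρh10) / (1 - ρh01 - ρh10)) - phat d) / phat d) * l d true +
              (p d * ((ρ01 - ρh01) / (1 - ρh01 - ρh10)) / phat d) * l d false)) +
          (∑ d ∈ univ.filter (fun d => rstar d = false),
            ((p d * ((ρ10 - ρh10) / (1 - ρh01 - ρh10)) / phat d) * l d true +
              ((p d * ((1 - ρh01 - ρ10) / (1 - ρh01 - ρh10)) - phat d) / phat d) * l d false))| := by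
  rw [expectOR_const_mul, expectOR_sum p _
    fun d => doublyRobustError (phat d) (ebar d) (surrogateLoss ρh01 ρh10 (l d))]
  simp only [expect_doublyRobustError, expect_surrogateLoss]
  rw [← mul_sub, abs_mul, abs_of_nonneg (by positivity), ← sum_sub_distrib, sum_filter, sum_filter,
    ← sum_add_distrib, ← sum_add_distrib]
  congr 2
  refine sum_congr rfl fun d _ => ?_
  have hphat_ne : phat d ≠ 0 := (hphat d).ne'
  cases rstar d
  all_goals
    simp only [if_true, Bool.false_eq_true, Bool.true_eq_false, if_false, add_zero]
    field_simp
    ring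

/-- **Bias of the OME-DR estimator.** Under the OME recommendation setup,
with true ratings `rstar`, losses `l d true = ℓ_{u,i}(1)` and `l d false = ℓ_{u,i}(0)`,
true propensities `p`, learned propensities `phat`, imputed errors `ebar`, true error
rates `ρ01, ρ10` and estimated error rates `ρh01, ρh10`, the bias
`|E[ε_OME-DR] − P*|` of the OME-DR estimator has the stated explicit form. -/
theorem bias_OME_DR {D : Type*} [Fintype D] [DecidableEq D] [Nonempty D]
    (rstar : D → Bool) (l : D → Bool → ℝ) (p phat ebar : D → ℝ)
    (ρ01 ρ10 ρh01 ρh10 : ℝ)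
    (hp0 : ∀ d, 0 < p d) (hp1 : ∀ d, p d ≤ 1) (hphat : ∀ d, 0 < phat d)
    (h01 : 0 ≤ ρ01) (h10 : 0 ≤ ρ10) (hsum : ρ01 + ρ10 < 1)
    (hh01 : 0 ≤ ρh01) (hh10 : 0 ≤ ρh10) (hhsum : ρh01 + ρh10 < 1) :
    |expectOR p (fun d => if rstar d then 1 - ρ01 else ρ10)
        (fun o r => (1 / (Fintype.card D : ℝ)) * ∑ d,
          ((1 - (if o d then (1 : ℝ) else 0) / phat d) * ebar d +
            ((if o d then (1 : ℝ) else 0) / phat d) *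
              (if r d then ((1 - ρh10) * l d true - ρh01 * l d false) / (1 - ρh01 - ρh10)
               else ((1 - ρh01) * l d false - ρh10 * l d true) / (1 - ρh01 - ρh10)))) -
        (1 / (Fintype.card D : ℝ)) * ∑ d, l d (rstar d)| =
      (1 / (Fintype.card D : ℝ)) *
        |(∑ d, (1 - p d / phat d) * ebar d) +
          (∑ d ∈ univ.filter (fun d => rstar d = true),
            (((p d * ((1 - ρ01 - ρh10) / (1 - ρh01 - ρh10)) - phat d) / phat d) * l d true +
              (p d * ((ρ01 - ρh01) / (1 - ρh01 - ρh10)) / phat d) * l d false)) +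
          (∑ d ∈ univ.filter (fun d => rstar d = false),
            ((p d * ((ρ10 - ρh10) / (1 - ρh01 - ρh10)) / phat d) * l d true +
              ((p d * ((1 - ρh01 - ρ10) / (1 - ρh01 - ρh10)) - phat d) / phat d) * l d false))| :=
  bias_OME_DR_general rstar l p phat ebar ρ01 ρ10 ρh01 ρh10 hphat
end

section
/- (Identification of the error rates under weak separability.) Let D be a nonempty finite set, let γ : D → [0,1], and let ρ01, ρ10 ≥ 0 with ρ01 + ρ10 < 1. Define η : D → ℝ by η(d) = (1−ρ01−ρ10)·γ(d) + ρ10. Assume weak separability: there exist d1, d0 ∈ D with γ(d1) = 1 and γ(d0) = 0. Then for every maximizer d> of η over D one has η(d>) = 1 − ρ01, and for every minimizer d< of η over D one has η(d<) = ρ10; in particular, ρ01 = 1 − max_{d∈D} η(d) and ρ10 = min_{d∈D} η(d). -/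
/-!
The observed rate `η = c • γ + ρ10`, with `c = 1 - ρ01 - ρ10 > 0`, is an increasing function of the
true rate `γ`. Hence `η` is maximized exactly where `γ` is, and under weak separability the
largest value of `γ` is `1`, giving `η = c + ρ10 = 1 - ρ01`; dually the smallest value of `γ`
is `0`, giving `η = ρ10`.
-/

section

variable {ι α β : Type*}

theorem Monotone.apply_eq_of_isMax_comp [Preorder α] [PartialOrder β] {f : α → β}
    (hf : Monotone f) {g : ι → α} {i j : ι} (hj : ∀ k, g k ≤ g j)
    (hi : ∀ k, f (g k) ≤ f (g i)) : f (g i) = f (g j) :=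
  le_antisymm (hf (hj i)) (hi j)

theorem Monotone.apply_eq_of_isMin_comp [Preorder α] [PartialOrder β] {f : α → β}
    (hf : Monotone f) {g : ι → α} {i j : ι} (hj : ∀ k, g j ≤ g k)
    (hi : ∀ k, f (g i) ≤ f (g k)) : f (g i) = f (g j) :=
  le_antisymm (hi j) (hf (hj i))

theorem Finset.sup'_univ_eq_of_forall_le [Fintype ι] [Nonempty ι] [SemilatticeSup α]
    {f : ι → α} {j : ι} (hj : ∀ k, f k ≤ f j) : univ.sup' univ_nonempty f = f j :=
  le_antisymm (sup'_le _ _ fun k _ => hj k) (le_sup' f (mem_univ j))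

theorem Finset.inf'_univ_eq_of_forall_le [Fintype ι] [Nonempty ι] [SemilatticeInf α]
    {f : ι → α} {j : ι} (hj : ∀ k, f j ≤ f k) : univ.inf' univ_nonempty f = f j :=
  le_antisymm (inf'_le f (mem_univ j)) (le_inf' _ _ fun k _ => hj k)

end

theorem error_rates_identified_under_weak_separability_general {D : Type*} [Fintype D] [Nonempty D]
    (γ : D → ℝ) (hγ : ∀ d, γ d ∈ Set.Icc (0 : ℝ) 1)
    (ρ01 ρ10 : ℝ) (hsum : ρ01 + ρ10 < 1)
    (d1 d0 : D) (hd1 : γ d1 = 1) (hd0 : γ d0 = 0) :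
    (∀ dmax : D, (∀ d' : D, (1 - ρ01 - ρ10) * γ d' + ρ10 ≤ (1 - ρ01 - ρ10) * γ dmax + ρ10) →
      (1 - ρ01 - ρ10) * γ dmax + ρ10 = 1 - ρ01) ∧
    (∀ dmin : D, (∀ d' : D, (1 - ρ01 - ρ10) * γ dmin + ρ10 ≤ (1 - ρ01 - ρ10) * γ d' + ρ10) →
      (1 - ρ01 - ρ10) * γ dmin + ρ10 = ρ10) ∧
    ρ01 = 1 - Finset.univ.sup' Finset.univ_nonempty (fun d => (1 - ρ01 - ρ10) * γ d + ρ10) ∧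
    ρ10 = Finset.univ.inf' Finset.univ_nonempty (fun d => (1 - ρ01 - ρ10) * γ d + ρ10) := by
  have hη_mono : Monotone fun x : ℝ => (1 - ρ01 - ρ10) * x + ρ10 := fun _ _ hxy =>
    add_le_add_left (mul_le_mul_of_nonneg_left hxy (by linarith)) _
  have hγ_le : ∀ d, γ d ≤ γ d1 := fun d => hd1 ▸ (hγ d).2
  have hγ_ge : ∀ d, γ d0 ≤ γ d := fun d => hd0 ▸ (hγ d).1
  have hη_d1 : (1 - ρ01 - ρ10) * γ d1 + ρ10 = 1 - ρ01 := by rw [hd1]; ring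
  have hη_d0 : (1 - ρ01 - ρ10) * γ d0 + ρ10 = ρ10 := by rw [hd0]; ring
  refine ⟨fun dmax hmax => ?_, fun dmin hmin => ?_, ?_, ?_⟩
  · exact (hη_mono.apply_eq_of_isMax_comp hγ_le hmax).trans hη_d1
  · exact (hη_mono.apply_eq_of_isMin_comp hγ_ge hmin).trans hη_d0
  · rw [Finset.sup'_univ_eq_of_forall_le (j := d1) fun d => hη_mono (hγ_le d)]
    beta_reduce
    rw [hη_d1]
    ring
  · rw [Finset.inf'_univ_eq_of_forall_le (j := d0) fun d => hη_mono (hγ_ge d)]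
    exact hη_d0.symm

/-- **Identification of the error rates under weak separability.**
Let `D` be a nonempty finite set, `γ : D → [0,1]` the true positive rating
probabilities, and `η d = (1−ρ01−ρ10)·γ d + ρ10` the observed positive rating
probabilities, where `ρ01, ρ10 ≥ 0` and `ρ01 + ρ10 < 1`. Under weak separability
(there exist `d1, d0 ∈ D` with `γ d1 = 1` and `γ d0 = 0`): every maximizer of `η`
attains `1 − ρ01`, every minimizer of `η` attains `ρ10`, and hence
`ρ01 = 1 − max η` and `ρ10 = min η`. -/
theorem error_rates_identified_under_weak_separability {D : Type*} [Fintype D] [Nonempty D]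
    (γ : D → ℝ) (hγ : ∀ d, γ d ∈ Set.Icc (0 : ℝ) 1)
    (ρ01 ρ10 : ℝ) (h01 : 0 ≤ ρ01) (h10 : 0 ≤ ρ10) (hsum : ρ01 + ρ10 < 1)
    (d1 d0 : D) (hd1 : γ d1 = 1) (hd0 : γ d0 = 0) :
    (∀ dmax : D, (∀ d' : D, (1 - ρ01 - ρ10) * γ d' + ρ10 ≤ (1 - ρ01 - ρ10) * γ dmax + ρ10) →
      (1 - ρ01 - ρ10) * γ dmax + ρ10 = 1 - ρ01) ∧
    (∀ dmin : D, (∀ d' : D, (1 - ρ01 - ρ10) * γ dmin + ρ10 ≤ (1 - ρ01 - ρ10) * γ d' + ρ10) →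
      (1 - ρ01 - ρ10) * γ dmin + ρ10 = ρ10) ∧
    ρ01 = 1 - Finset.univ.sup' Finset.univ_nonempty (fun d => (1 - ρ01 - ρ10) * γ d + ρ10) ∧
    ρ10 = Finset.univ.inf' Finset.univ_nonempty (fun d => (1 - ρ01 - ρ10) * γ d + ρ10) :=
  error_rates_identified_under_weak_separability_general γ hγ ρ01 ρ10 hsum d1 d0 hd1 hd0
end

section
/- (Double robustness of the DR estimator, without OME.) Under the MNAR recommendation setup, suppose that for every (u,i) ∈ D either the imputed error is accurate, ê_{u,i} = e_{u,i}, or the learned propensity is accurate, p̂_{u,i} = p_{u,i}. Then the DR estimator ε_DR = (1/|D|)·Σ_{(u,i)∈D} [ ê_{u,i} + (o_{u,i}/p̂_{u,i})·(e_{u,i} − ê_{u,i}) ] is unbiased for the prediction inaccuracy: E[ε_DR] = P. -/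
/-! By linearity of expectation it suffices that each summand has expectation `e d`. Since
`o d` is Bernoulli(`p d`), that expectation is `ehat d + (p d / phat d) * (e d - ehat d)`: the
correction vanishes when `ehat d = e d`, and the ratio is `1` when `phat d = p d`. -/

open Finset

/-- Expectation of a functional `g` of an independent family of Bernoulli random
variables `o d ~ Bernoulli (p d)` (observation indicators), encoded as a weighted sum
over all realizations. -/
noncomputable def expectO {D : Type*} [Fintype D] [DecidableEq D] (p : D → ℝ)
    (g : (D → Bool) → ℝ) : ℝ :=
  ∑ o : D → Bool, (∏ d, (if o d then p d else 1 - p d)) * g o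

section expectO

variable {D : Type*} [Fintype D] [DecidableEq D] (p : D → ℝ)

theorem expectO_const_mul (c : ℝ) (g : (D → Bool) → ℝ) :
    expectO p (fun o => c * g o) = c * expectO p g := by
  rw [expectO, expectO, mul_sum]
  exact sum_congr rfl fun o _ => mul_left_comm _ _ _

theorem expectO_sum {ι : Type*} (s : Finset ι) (g : ι → (D → Bool) → ℝ) :
    expectO p (fun o => ∑ i ∈ s, g i o) = ∑ i ∈ s, expectO p (g i) := by
  simp only [expectO, mul_sum]
  exact sum_comm

/-- Only the factor at `d` sees `h`; summing out every other coordinate gives `p d' + (1 - p d') = 1`. -/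
theorem expectO_comp_eval (d : D) (h : Bool → ℝ) :
    expectO p (fun o => h (o d)) = p d * h true + (1 - p d) * h false := by
  let w : D → Bool → ℝ := fun d' b => if b then p d' else 1 - p d'
  let f : D → Bool → ℝ := fun d' b => w d' b * if d' = d then h b else 1
  have factor (o : D → Bool) : (∏ d', w d' (o d')) * h (o d) = ∏ d', f d' (o d') := by
    rw [prod_mul_distrib, prod_ite_eq' univ d (fun d' => h (o d')), if_pos (mem_univ d)]
  have marginal : ∏ d', ∑ b, f d' b = p d * h true + (1 - p d) * h false := by
    rw [prod_eq_single d (fun d' _ hd' => by simp [f, w, hd']) (by simp)]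
    simp [f, w]
  calc expectO p (fun o => h (o d))
      = ∑ o : D → Bool, ∏ d', f d' (o d') := sum_congr rfl fun o _ => factor o
    _ = ∏ d', ∑ b, f d' b := (Fintype.prod_sum f).symm
    _ = _ := marginal

end expectO

theorem doublyRobust_term_expect_eq {p phat e ehat : ℝ} (hp : p ≠ 0)
    (h : ehat = e ∨ phat = p) :
    p * (ehat + (1 / phat) * (e - ehat)) + (1 - p) * (ehat + (0 / phat) * (e - ehat)) = e := by
  rcases h with rfl | rfl
  · ring
  · field_simp
    ring

theorem double_robustness_DR_general {D : Type*} [Fintype D] [DecidableEq D]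
    (e ehat p phat : D → ℝ)
    (hp0 : ∀ d, 0 < p d)
    (hDR : ∀ d, ehat d = e d ∨ phat d = p d) :
    expectO p (fun o => (1 / (Fintype.card D : ℝ)) * ∑ d,
        (ehat d + ((if o d then (1 : ℝ) else 0) / phat d) * (e d - ehat d))) =
      (1 / (Fintype.card D : ℝ)) * ∑ d, e d := by
  rw [expectO_const_mul, expectO_sum]
  congr 1
  refine sum_congr rfl fun d _ => ?_
  rw [expectO_comp_eval p d
    (fun b => ehat d + ((if b then (1 : ℝ) else 0) / phat d) * (e d - ehat d))]
  exact doublyRobust_term_expect_eq (hp0 d).ne' (hDR d)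

/-- **Double robustness of the DR estimator, without OME.** Under the
MNAR recommendation setup with prediction errors `e`, imputed errors `ehat`, true
propensities `p ∈ (0,1]` and learned propensities `phat > 0`, if for every `d` either
`ehat d = e d` or `phat d = p d`, then the DR estimator is unbiased: `E[ε_DR] = P`. -/
theorem double_robustness_DR {D : Type*} [Fintype D] [DecidableEq D] [Nonempty D]
    (e ehat p phat : D → ℝ)
    (hp0 : ∀ d, 0 < p d) (hp1 : ∀ d, p d ≤ 1) (hphat : ∀ d, 0 < phat d)
    (hDR : ∀ d, ehat d = e d ∨ phat d = p d) :
    expectO p (fun o => (1 / (Fintype.card D : ℝ)) * ∑ d,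
        (ehat d + ((if o d then (1 : ℝ) else 0) / phat d) * (e d - ehat d))) =
      (1 / (Fintype.card D : ℝ)) * ∑ d, e d :=
  double_robustness_DR_general e ehat p phat hp0 hDR
end
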